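/- arXiv:0809.0967 — 2 statements merged into one kernel-verified Lean document; each statement's English description precedes it below -/
import Mathlib

section
/- In the Poincaré upper half-plane model restricted to a cusp S¹_L × (a²,∞) with metric y⁻²(dx²+dy²), the Riemannian distance is given by d(z,z') = arccosh( (y² + y'² + d_{S_L}(x,x')²) / (2yy') ), where d_{S_L} is the distance on the circle of radius L. -/
open UpperHalfPlane

/-- The inverse hyperbolic cosine. -/
noncomputable def arcosh (x : ℝ) : ℝ := Real.log (x + Real.sqrt (x ^ 2 - 1))

/-!
For each horizontal translate, `cosh d = 1 + |z - w|² / (2 y y')` depends on the translate only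
through its horizontal offset from `z` and increases with it. Hence the infimum over translates
is attained at the translate with the smallest horizontal offset, which exists because the offsets
`|c - α n|` are minimised at `n = round (c / α)`.
-/

theorem arcosh_eq_real_arcosh : arcosh = Real.arcosh := rfl

theorem ciInf_eq_of_forall_le {ι α : Type*} [ConditionallyCompleteLattice α] {f : ι → α}
    (i₀ : ι) (h : ∀ i, f i₀ ≤ f i) : ⨅ i, f i = f i₀ :=
  haveI : Nonempty ι := ⟨i₀⟩
  IsLeast.isGLB ⟨Set.mem_range_self i₀, Set.forall_mem_range.2 h⟩ |>.ciInf_eq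

theorem exists_forall_abs_sub_mul_int_le (c α : ℝ) :
    ∃ n₀ : ℤ, ∀ n : ℤ, |c - α * n₀| ≤ |c - α * n| := by
  rcases eq_or_ne α 0 with rfl | hα
  · exact ⟨0, fun n => by simp⟩
  · have hscale (m : ℤ) : |c - α * m| = |α| * |c / α - m| := by
      rw [← abs_mul, mul_sub, mul_div_cancel₀ c hα]
    refine ⟨round (c / α), fun n => ?_⟩
    rw [hscale, hscale]
    exact mul_le_mul_of_nonneg_left (round_le _ _) (abs_nonneg α)

namespace UpperHalfPlane

theorem cosh_dist_real_vadd (z w : ℍ) (t : ℝ) :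
    Real.cosh (dist z (t +ᵥ w))
      = (z.im ^ 2 + w.im ^ 2 + (z.re - (w.re + t)) ^ 2) / (2 * z.im * w.im) := by
  have hy := z.im_pos
  have hy' := w.im_pos
  rw [cosh_dist, Complex.dist_eq_re_im, Real.sq_sqrt (by positivity)]
  simp only [coe_re, coe_im, vadd_re, vadd_im]
  field_simp
  ring

theorem dist_real_vadd (z w : ℍ) (t : ℝ) :
    dist z (t +ᵥ w)
      = arcosh ((z.im ^ 2 + w.im ^ 2 + (z.re - (w.re + t)) ^ 2) / (2 * z.im * w.im)) := by
  rw [← cosh_dist_real_vadd, arcosh_eq_real_arcosh, Real.arcosh_cosh dist_nonneg]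

end UpperHalfPlane

theorem cusp_distance_formula_general (L : ℝ)
    (z z' : UpperHalfPlane) :
    (⨅ n : ℤ, dist z (((2 * Real.pi * L * n : ℝ)) +ᵥ z'))
      = arcosh ((z.im ^ 2 + z'.im ^ 2
          + (⨅ n : ℤ, |z.re - (z'.re + 2 * Real.pi * L * n)|) ^ 2)
        / (2 * z.im * z'.im)) := by
  set α := 2 * Real.pi * L
  have hy := z.im_pos
  have hy' := z'.im_pos
  obtain ⟨n₀, hn₀⟩ := exists_forall_abs_sub_mul_int_le (z.re - z'.re) α
  have hmin (n : ℤ) : |z.re - (z'.re + α * n₀)| ≤ |z.re - (z'.re + α * n)| := by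
    simpa only [sub_add_eq_sub_sub] using hn₀ n
  have hdist (n : ℤ) : dist z ((α * n₀ : ℝ) +ᵥ z') ≤ dist z ((α * n : ℝ) +ᵥ z') := by
    rw [dist_real_vadd, dist_real_vadd, arcosh_eq_real_arcosh,
      Real.arcosh_le_arcosh (by positivity) (by positivity)]
    gcongr (_ + _ + ?_) / _
    exact sq_le_sq.2 (hmin n)
  rw [ciInf_eq_of_forall_le n₀ hdist, ciInf_eq_of_forall_le n₀ hmin, dist_real_vadd, sq_abs]

/-- In the cusp `S¹_L × (a²,∞)` (quotient of the Poincaré upper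
half-plane by the horizontal translation `x ↦ x + 2πL`), the Riemannian
distance between `z = (x,y)` and `z' = (x',y')` — i.e. the infimum over all
integer shifts of the upper half-plane distance — equals
`arccosh((y² + y'² + d_{S_L}(x,x')²) / (2yy'))`, where
`d_{S_L}(x,x') = inf_n |x − x' − 2πLn|` is the distance on the circle of
radius `L`. -/
theorem cusp_distance_formula (L a : ℝ) (hL : 0 < L)
    (z z' : UpperHalfPlane) (hz : a ^ 2 < z.im) (hz' : a ^ 2 < z'.im) :
    (⨅ n : ℤ, dist z (((2 * Real.pi * L * n : ℝ)) +ᵥ z'))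
      = arcosh ((z.im ^ 2 + z'.im ^ 2
          + (⨅ n : ℤ, |z.re - (z'.re + 2 * Real.pi * L * n)|) ^ 2)
        / (2 * z.im * z'.im)) :=
  cusp_distance_formula_general L z z'
end

section
/- Under the change of variables y = 2ρ e^{−t} (ρ > 0), the operator P = D_t² + (−(ρ/cosh t) + β tanh t)² + (1/4)(1 + cosh⁻²t) on L²((α,∞), dt) is unitarily equivalent to P̃_ρ = D_y(y² D_y) + W_ρ(y) on L²((0, 2ρe^{−α}), dy), where W_ρ(y) = ( β(1−y²/(4ρ²))/(1+y²/(4ρ²)) − y/(1+y²/(4ρ²)) )² + ( (y/(2ρ))/(1+y²/(4ρ²)) )². -/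
open MeasureTheory Set

/-- The funnel-mode potential after the change of variable `y = 2ρe^{−t}`. -/
noncomputable def Wpot (β ρ y : ℝ) : ℝ :=
  (β * (1 - y ^ 2 / (4 * ρ ^ 2)) / (1 + y ^ 2 / (4 * ρ ^ 2))
      - y / (1 + y ^ 2 / (4 * ρ ^ 2))) ^ 2
    + ((y / (2 * ρ)) / (1 + y ^ 2 / (4 * ρ ^ 2))) ^ 2

lemma sqrt_exp' (x : ℝ) : Real.sqrt (Real.exp x) = Real.exp (x / 2) := by
  rw [show Real.exp x = Real.exp (x / 2) ^ 2 by
    rw [sq, ← Real.exp_add]; ring_nf]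
  exact Real.sqrt_sq (Real.exp_pos _).le

lemma pot_eq (ρ β t : ℝ) (hρ : 0 < ρ) :
    (-(ρ / Real.cosh t) + β * Real.tanh t) ^ 2
      + (1 / 4) * (1 + ((Real.cosh t) ^ 2)⁻¹)
    = Wpot β ρ (2 * ρ * Real.exp (-t)) + 1 / 4 := by
  have h1 : Real.exp t ≠ 0 := (Real.exp_pos t).ne'
  have h2 : ρ ≠ 0 := hρ.ne'
  have hc : Real.exp t + (Real.exp t)⁻¹ ≠ 0 := by positivity
  have hd : 1 + (2 * ρ * (Real.exp t)⁻¹) ^ 2 / (4 * ρ ^ 2) ≠ 0 := by positivity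
  rw [Real.tanh_eq_sinh_div_cosh, Real.sinh_eq, Real.cosh_eq]
  unfold Wpot
  rw [Real.exp_neg]
  field_simp
  ring

/-- Under the change of variables `y = 2ρe^{−t}` (`ρ > 0`), the
operator `P = D_t² + (−ρ/cosh t + β tanh t)² + (1/4)(1 + cosh⁻²t)` on
`L²((α,∞), dt)` is unitarily equivalent to `P̃_ρ = D_y(y²D_y) + W_ρ(y)` on
`L²((0, 2ρe^{−α}), dy)`: the unitary map is `(Uf)(t) = √(2ρe^{−t}) f(2ρe^{−t})`,
it preserves the `L²` norms, and it intertwines the two differential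
expressions `P(Uf) = U(P̃_ρ f)` pointwise. -/
theorem funnel_mode_unitary_equivalence (ρ β α : ℝ) (hρ : 0 < ρ)
    (f : ℝ → ℂ) (hf : ContDiff ℝ (⊤ : ℕ∞) f) :
    let u : ℝ → ℂ := fun s =>
      (Real.sqrt (2 * ρ * Real.exp (-s)) : ℂ) * f (2 * ρ * Real.exp (-s))
    (∀ t : ℝ,
      -(deriv (deriv u) t)
        + (((-(ρ / Real.cosh t) + β * Real.tanh t) ^ 2
            + (1 / 4) * (1 + ((Real.cosh t) ^ 2)⁻¹) : ℝ) : ℂ) * u t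
      = (Real.sqrt (2 * ρ * Real.exp (-t)) : ℂ)
          * (-(deriv (fun y : ℝ => ((y : ℂ) ^ 2) * deriv f y)
                (2 * ρ * Real.exp (-t)))
            + ((Wpot β ρ (2 * ρ * Real.exp (-t)) : ℝ) : ℂ)
                * f (2 * ρ * Real.exp (-t))))
    ∧ (∫ t in Set.Ioi α, ‖u t‖ ^ 2)
      = ∫ y in Set.Ioo (0 : ℝ) (2 * ρ * Real.exp (-α)), ‖f y‖ ^ 2 := by
  intro u
  set E : ℝ → ℝ := fun s => 2 * ρ * Real.exp (-s) with hEdef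
  have hEpos : ∀ s, 0 < E s := fun s => by positivity
  have hE : ∀ s, HasDerivAt E (-(E s)) s := by
    intro s
    have h0 : HasDerivAt (fun s : ℝ => -s) (-1) s := (hasDerivAt_id s).neg
    have := ((Real.hasDerivAt_exp (-s)).comp s h0).const_mul (2 * ρ)
    simpa [hEdef, mul_comm] using this
  have hf2 : ContDiff ℝ ((⊤ : ℕ∞) : WithTop ℕ∞) f := hf.of_le (by simp)
  have h1top : (1 : WithTop ℕ∞) ≤ ((⊤ : ℕ∞) : WithTop ℕ∞) := by
    exact_mod_cast le_top
  have hfd : Differentiable ℝ f := hf2.differentiable (by simp)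
  have hfd' : Differentiable ℝ (deriv f) :=
    ((contDiff_infty_iff_deriv.mp hf2).2).differentiable (by simp)
  -- scalar factor
  set c : ℝ → ℂ := fun s => ((Real.sqrt (2 * ρ) * Real.exp (-(s / 2)) : ℝ) : ℂ)
    with hcdef
  have hsq : ∀ s, (Real.sqrt (2 * ρ * Real.exp (-s)) : ℝ)
      = Real.sqrt (2 * ρ) * Real.exp (-(s / 2)) := by
    intro s
    rw [Real.sqrt_mul (by positivity : (0:ℝ) ≤ 2 * ρ), sqrt_exp']
    ring_nf
  have hu : u = fun s => c s * f (E s) := by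
    funext s; simp only [u, hcdef, hEdef, hsq s]
  have hc : ∀ s, HasDerivAt c (-(1 / 2 : ℂ) * c s) s := by
    intro s
    have h0 : HasDerivAt (fun s : ℝ => -(s / 2)) (-(1 / 2)) s := by
      exact ((hasDerivAt_id s).div_const 2).neg
    have h1 := ((Real.hasDerivAt_exp (-(s / 2))).comp s h0).const_mul
      (Real.sqrt (2 * ρ))
    have h2 := h1.ofReal_comp
    convert h2 using 1
    all_goals try rfl
    push_cast [hcdef]
    ring
  have hfE : ∀ s, HasDerivAt (fun s => f (E s))
      (((-(E s) : ℝ) : ℂ) * deriv f (E s)) s := by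
    intro s
    have := HasDerivAt.scomp (𝕜 := ℝ) s (hfd (E s)).hasDerivAt (hE s)
    simpa [Function.comp_def, Complex.real_smul] using this
  have hfE' : ∀ s, HasDerivAt (fun s => deriv f (E s))
      (((-(E s) : ℝ) : ℂ) * deriv (deriv f) (E s)) s := by
    intro s
    have := HasDerivAt.scomp (𝕜 := ℝ) s (hfd' (E s)).hasDerivAt (hE s)
    simpa [Function.comp_def, Complex.real_smul] using this
  set u1 : ℝ → ℂ := fun s =>
    c s * (-(1 / 2 : ℂ) * f (E s) - ((E s : ℝ) : ℂ) * deriv f (E s)) with hu1def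
  have hu1 : ∀ s, HasDerivAt u (u1 s) s := by
    intro s
    rw [hu]
    have := (hc s).mul (hfE s)
    convert this using 1
    all_goals try rfl
    push_cast [hu1def]
    ring
  have hderivu : deriv u = u1 := funext fun s => (hu1 s).deriv
  have hu2 : ∀ t, HasDerivAt u1
      (c t * ((1 / 4 : ℂ) * f (E t) + 2 * ((E t : ℝ) : ℂ) * deriv f (E t)
        + ((E t : ℝ) : ℂ) ^ 2 * deriv (deriv f) (E t))) t := by
    intro t
    have hinner : HasDerivAt
        (fun s => -(1 / 2 : ℂ) * f (E s) - ((E s : ℝ) : ℂ) * deriv f (E s))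
        (-(1 / 2 : ℂ) * (((-(E t) : ℝ) : ℂ) * deriv f (E t))
          - ((((-(E t) : ℝ) : ℂ)) * deriv f (E t)
            + ((E t : ℝ) : ℂ) * (((-(E t) : ℝ) : ℂ) * deriv (deriv f) (E t)))) t := by
      exact ((hfE t).const_mul (-(1 / 2 : ℂ))).sub
        (((hE t).ofReal_comp.mul (hfE' t)).congr_deriv (by ring))
    have := (hc t).mul hinner
    convert this using 1
    all_goals try rfl
    push_cast [hu1def]
    ring
  have hyder : ∀ y : ℝ, HasDerivAt (fun y : ℝ => ((y : ℂ) ^ 2) * deriv f y)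
      (2 * (y : ℂ) * deriv f y + (y : ℂ) ^ 2 * deriv (deriv f) y) y := by
    intro y
    have h0 : HasDerivAt (fun y : ℝ => (y : ℂ)) 1 y := by
      simpa using (hasDerivAt_id y).ofReal_comp
    have h1 : HasDerivAt (fun y : ℝ => ((y : ℂ) ^ 2)) (2 * (y : ℂ)) y := by
      have h2 := h0.mul h0
      have h3 : (fun y : ℝ => ((y : ℂ) ^ 2)) = fun y : ℝ => (y : ℂ) * (y : ℂ) := by
        funext z; ring
      rw [h3]
      exact h2.congr_deriv (by ring)
    exact (h1.mul (hfd' y).hasDerivAt).congr_deriv (by ring)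
  constructor
  · intro t
    rw [hderivu, (hu2 t).deriv, (hyder (E t)).deriv, hu]
    have hV := pot_eq ρ β t hρ
    have hVc : (((-(ρ / Real.cosh t) + β * Real.tanh t) ^ 2
        + (1 / 4) * (1 + ((Real.cosh t) ^ 2)⁻¹) : ℝ) : ℂ)
        = ((Wpot β ρ (E t) : ℝ) : ℂ) + 1 / 4 := by
      rw [hV]; push_cast; ring
    have hcs : (Real.sqrt (2 * ρ * Real.exp (-t)) : ℂ) = c t := by
      rw [hsq t]
    rw [hVc, hcs]
    ring
  · -- change of variables in the integral
    have himg : E '' Set.Ioi α = Set.Ioo 0 (2 * ρ * Real.exp (-α)) := by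
      ext y
      constructor
      · rintro ⟨t, ht, rfl⟩
        refine ⟨hEpos t, ?_⟩
        have : Real.exp (-t) < Real.exp (-α) :=
          Real.exp_lt_exp.mpr (neg_lt_neg ht)
        simpa [hEdef] using mul_lt_mul_of_pos_left this (by positivity : (0:ℝ) < 2 * ρ)
      · rintro ⟨hy0, hy1⟩
        refine ⟨-Real.log (y / (2 * ρ)), ?_, ?_⟩
        · have hyd : 0 < y / (2 * ρ) := by positivity
          have : Real.log (y / (2 * ρ)) < -α := by
            rw [Real.log_lt_iff_lt_exp hyd]
            rw [div_lt_iff₀ (by positivity : (0:ℝ) < 2 * ρ)]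
            linarith [hy1]
          simpa [Set.mem_Ioi] using lt_neg_of_lt_neg this
        · have hyd : 0 < y / (2 * ρ) := by positivity
          simp only [hEdef, neg_neg, Real.exp_log hyd]
          field_simp
      
    have hinj : Set.InjOn E (Set.Ioi α) := by
      intro a _ b _ hab
      have h2 : (2 * ρ) ≠ 0 := by positivity
      have := mul_left_cancel₀ h2 hab
      have := Real.exp_injective this
      linarith [this]
    have hder : ∀ t ∈ Set.Ioi α, HasDerivWithinAt E (-(E t)) (Set.Ioi α) t :=
      fun t _ => (hE t).hasDerivWithinAt
    have hCoV := MeasureTheory.integral_image_eq_integral_abs_deriv_smul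
      measurableSet_Ioi hder hinj (fun y => ‖f y‖ ^ 2)
    rw [← himg, hCoV]
    refine MeasureTheory.setIntegral_congr_fun measurableSet_Ioi (fun t _ => ?_)
    have : ‖u t‖ ^ 2 = (E t) * ‖f (E t)‖ ^ 2 := by
      simp only [u, hEdef]
      rw [norm_mul, mul_pow, Complex.norm_real, Real.norm_eq_abs,
        abs_of_nonneg (Real.sqrt_nonneg _), Real.sq_sqrt (by positivity : (0:ℝ) ≤ 2 * ρ * Real.exp (-t))]
    rw [this, abs_neg, abs_of_pos (hEpos t), smul_eq_mul]
end
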